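/- Let g(x,y,z,w) = −w³xy + w²x²z + w²y²z − wxyz² and h(z,w) = z³ − 2w²z. Let (x,y) ∈ ℂ² with (x,y) ≠ (0,0) and (z,w) ∈ ℂ² with (z,w) ≠ (0,0). Then g(x,y,z,w) = 0 and h(z,w) = 0 hold simultaneously if and only if there exist nonzero complex numbers λ and μ such that ((x,y),(z,w)) equals one of: (λ(1,0), μ(0,1)), (λ(0,1), μ(0,1)), (λ(1,√2), μ(1,1/√2)), (λ(1,1/√2), μ(1,1/√2)), (λ(1,−√2), μ(1,−1/√2)), (λ(1,−1/√2), μ(1,−1/√2)). That is, exactly six points of ℙ¹×ℙ¹ have infinite fiber under φ. -/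
import Mathlib


/-- The coefficient `g` of `f = g + u²·h` viewed as a polynomial in `u`. -/
def gWh (x y z w : ℂ) : ℂ := -w^3*x*y + w^2*x^2*z + w^2*y^2*z - w*x*y*z^2

/-- The coefficient `h` of `f = g + u²·h` viewed as a polynomial in `u`. -/
def hWh (z w : ℂ) : ℂ := z^3 - 2*w^2*z

theorem whitehead_infinite_fiber_points (x y z w : ℂ)
    (hxy : (x, y) ≠ (0, 0)) (hzw : (z, w) ≠ (0, 0)) :
    (gWh x y z w = 0 ∧ hWh z w = 0) ↔
      ∃ l μ : ℂ, l ≠ 0 ∧ μ ≠ 0 ∧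
        (((x, y) = (l, 0) ∧ (z, w) = (0, μ)) ∨
         ((x, y) = (0, l) ∧ (z, w) = (0, μ)) ∨
         ((x, y) = (l, l * Real.sqrt 2) ∧ (z, w) = (μ, μ / Real.sqrt 2)) ∨
         ((x, y) = (l, l / Real.sqrt 2) ∧ (z, w) = (μ, μ / Real.sqrt 2)) ∨
         ((x, y) = (l, -(l * Real.sqrt 2)) ∧ (z, w) = (μ, -(μ / Real.sqrt 2))) ∨
         ((x, y) = (l, -(l / Real.sqrt 2)) ∧ (z, w) = (μ, -(μ / Real.sqrt 2)))) := by
  set s : ℂ := ((Real.sqrt 2 : ℝ) : ℂ) with hsdef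
  have hs : s ^ 2 = 2 := by
    rw [hsdef, ← Complex.ofReal_pow, Real.sq_sqrt (by norm_num : (2:ℝ) ≥ 0)]
    norm_num
  have hs0 : s ≠ 0 := by
    intro h
    rw [h] at hs
    norm_num at hs
  have hxy' : x ≠ 0 ∨ y ≠ 0 := by
    by_contra h
    push_neg at h
    exact hxy (by simp [h.1, h.2])
  have hdiv : ∀ a : ℂ, a / s = a * s / 2 := by
    intro a
    field_simp
    linear_combination -a * hs
  have hzw' : z ≠ 0 ∨ w ≠ 0 := by
    by_contra h
    push_neg at h
    exact hzw (by simp [h.1, h.2])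
  constructor
  · rintro ⟨hg, hh⟩
    have hh' : z * ((z - s*w) * (z + s*w)) = 0 := by
      unfold hWh at hh
      linear_combination hh - w^2 * z * hs
    rcases mul_eq_zero.1 hh' with hz0 | hfac
    · -- z = 0
      have hw0 : w ≠ 0 := by
        rcases hzw' with h | h
        · exact absurd hz0 h
        · exact h
      have hxy0 : x * y = 0 := by
        have h3 : (w^3) * (x*y) = 0 := by
          unfold gWh at hg
          linear_combination -hg + (w^2*x^2 + w^2*y^2 - w*x*y*z) * hz0
        exact (mul_eq_zero.1 h3).resolve_left (pow_ne_zero 3 hw0)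
      rcases mul_eq_zero.1 hxy0 with hx0 | hy0
      · have hy : y ≠ 0 := by
          rcases hxy' with h | h
          · exact absurd hx0 h
          · exact h
        exact ⟨y, w, hy, hw0, Or.inr (Or.inl ⟨by simp [hx0], by simp [hz0]⟩)⟩
      · have hx : x ≠ 0 := by
          rcases hxy' with h | h
          · exact h
          · exact absurd hy0 h
        exact ⟨x, w, hx, hw0, Or.inl ⟨by simp [hy0], by simp [hz0]⟩⟩
    · have hw0 : w ≠ 0 := by
        intro hw
        have hzz : z = 0 := by
          rcases mul_eq_zero.1 hfac with h | h <;>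
            · rw [hw] at h; simpa using h
        rcases hzw' with h' | h'
        · exact h' hzz
        · exact h' hw
      rcases mul_eq_zero.1 hfac with hzp | hzm
      · -- z = s * w
        have hz : z = s * w := by linear_combination hzp
        subst hz
        have hgfac : (w^3) * ((s*x - y) * (x - s*y)) = 0 := by
          unfold gWh at hg
          linear_combination hg
        have := (mul_eq_zero.1 hgfac).resolve_left (pow_ne_zero 3 hw0)
        rcases mul_eq_zero.1 this with h1 | h2
        · -- y = s * x
          have hx0 : x ≠ 0 := by
            intro hx
            rcases hxy' with h | h
            · exact h hx
            · exact h (by rw [hx] at h1; linear_combination -h1)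
          refine ⟨x, s*w, hx0, mul_ne_zero hs0 hw0,
            Or.inr (Or.inr (Or.inl ⟨?_, ?_⟩))⟩
          · rw [Prod.ext_iff]
            exact ⟨rfl, by linear_combination -h1⟩
          · rw [Prod.ext_iff]
            refine ⟨rfl, ?_⟩
            field_simp
        · -- x = s * y
          have hx0 : x ≠ 0 := by
            intro hx
            rcases hxy' with h | h
            · exact h hx
            · refine h ?_
              rw [hx] at h2
              have := (mul_eq_zero.1 (by linear_combination -h2 : s * y = 0)).resolve_left hs0
              exact this
          refine ⟨x, s*w, hx0, mul_ne_zero hs0 hw0,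
            Or.inr (Or.inr (Or.inr (Or.inl ⟨?_, ?_⟩)))⟩
          · rw [Prod.ext_iff]
            refine ⟨rfl, ?_⟩
            field_simp
            linear_combination -h2
          · rw [Prod.ext_iff]
            refine ⟨rfl, ?_⟩
            field_simp
      · -- z = -(s * w)
        have hz : z = -(s * w) := by linear_combination hzm
        subst hz
        have hgfac : (w^3) * ((s*x + y) * (x + s*y)) = 0 := by
          unfold gWh at hg
          linear_combination -hg
        have := (mul_eq_zero.1 hgfac).resolve_left (pow_ne_zero 3 hw0)
        rcases mul_eq_zero.1 this with h1 | h2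
        · -- y = -s * x
          have hx0 : x ≠ 0 := by
            intro hx
            rcases hxy' with h | h
            · exact h hx
            · exact h (by rw [hx] at h1; linear_combination h1)
          refine ⟨x, -(s*w), hx0, neg_ne_zero.2 (mul_ne_zero hs0 hw0),
            Or.inr (Or.inr (Or.inr (Or.inr (Or.inl ⟨?_, ?_⟩))))⟩
          · rw [Prod.ext_iff]
            exact ⟨rfl, by linear_combination h1⟩
          · rw [Prod.ext_iff]
            refine ⟨rfl, ?_⟩
            field_simp
        · -- x = -s * y
          have hx0 : x ≠ 0 := by
            intro hx
            rcases hxy' with h | h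
            · exact h hx
            · refine h ?_
              rw [hx] at h2
              exact (mul_eq_zero.1 (by linear_combination h2 : s * y = 0)).resolve_left hs0
          refine ⟨x, -(s*w), hx0, neg_ne_zero.2 (mul_ne_zero hs0 hw0),
            Or.inr (Or.inr (Or.inr (Or.inr (Or.inr ⟨?_, ?_⟩))))⟩
          · rw [Prod.ext_iff]
            refine ⟨rfl, ?_⟩
            field_simp
            linear_combination h2
          · rw [Prod.ext_iff]
            refine ⟨rfl, ?_⟩
            field_simp
  · rintro ⟨l, μ, hl, hμ, hcase⟩
    rcases hcase with ⟨h1, h2⟩ | ⟨h1, h2⟩ | ⟨h1, h2⟩ | ⟨h1, h2⟩ | ⟨h1, h2⟩ | ⟨h1, h2⟩ <;>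
      (rw [Prod.ext_iff] at h1 h2; obtain ⟨hx, hy⟩ := h1; obtain ⟨hz, hw⟩ := h2;
       simp only at hx hy hz hw; subst hx; subst hy; subst hz; subst hw;
       unfold gWh hWh; refine ⟨?_, ?_⟩)
    · ring
    · ring
    · ring
    · ring
    · simp only [hdiv]
      linear_combination (x^2*z^3*s^2/8) * hs
    · simp only [hdiv]
      linear_combination (-z^3/2) * hs
    · simp only [hdiv]
      ring
    · simp only [hdiv]
      linear_combination (-z^3/2) * hs
    · simp only [hdiv]
      linear_combination (x^2*z^3*s^2/8) * hs
    · simp only [hdiv]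
      linear_combination (-z^3/2) * hs
    · simp only [hdiv]
      ring
    · simp only [hdiv]
      linear_combination (-z^3/2) * hs
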